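/- arXiv:1909.08126 — 3 statements merged into one kernel-verified Lean document; each statement's English description precedes it below -/
import Mathlib

section
/- Let q be a prime power and F a field of characteristic dividing q containing an element y0. The formal derivative of the polynomial f(t) = (y0^{q^2} - t)^{q^2-q+1} - (t^{q^2} - t) * (y0^{q^2} - y0)^{q^2-q} in F[t] equals (-(y0^{q^2} - t)^{q-1} + (y0^{q^2} - y0)^{q-1})^q. -/
open Polynomial

theorem gk_first_eq_derivative
    (p n q : ℕ) (hp : p.Prime) (hn : n ≠ 0) (hq : q = p ^ n)
    (F : Type*) [Field F] [CharP F p] (y0 : F) :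
    derivative ((C (y0 ^ q ^ 2) - X) ^ (q ^ 2 - q + 1)
        - (X ^ q ^ 2 - X) * C ((y0 ^ q ^ 2 - y0) ^ (q ^ 2 - q)) : F[X])
      = (-(C (y0 ^ q ^ 2) - X) ^ (q - 1) + C ((y0 ^ q ^ 2 - y0) ^ (q - 1))) ^ q := by
  haveI := Fact.mk hp
  have hq1 : 1 ≤ q := hq ▸ Nat.one_le_pow _ _ hp.pos
  have hqq : q ≤ q ^ 2 := Nat.le_self_pow two_ne_zero q
  have hqF : (q : F) = 0 := by
    rw [hq, Nat.cast_pow, CharP.cast_eq_zero, zero_pow hn]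
  set c : F := y0 ^ q ^ 2
  set d : F := y0 ^ q ^ 2 - y0
  have hL : derivative ((C c - X) ^ (q ^ 2 - q + 1)
        - (X ^ q ^ 2 - X) * C (d ^ (q ^ 2 - q)) : F[X])
      = -(C c - X) ^ (q ^ 2 - q) + C (d ^ (q ^ 2 - q)) := by
    have hcast : ((q ^ 2 - q + 1 : ℕ) : F) = 1 := by
      push_cast [Nat.cast_sub hqq]
      rw [pow_two, hqF]; ring
    rw [derivative_sub, derivative_pow, derivative_sub, derivative_C, derivative_X,
      derivative_mul, derivative_C, derivative_sub, derivative_pow, derivative_X]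
    rw [Nat.add_sub_cancel]
    push_cast [hcast]
    rw [hqF]
    simp only [ne_eq, OfNat.ofNat_ne_zero, not_false_eq_true, zero_pow, map_zero, mul_zero,
      zero_mul, map_one]
    ring
  have hR : ((-(C c - X) ^ (q - 1) + C (d ^ (q - 1)) : F[X])) ^ q
      = -(C c - X) ^ (q ^ 2 - q) + C (d ^ (q ^ 2 - q)) := by
    rw [hq, add_pow_char_pow, neg_pow, ← pow_mul, ← hq, ← C_pow, ← pow_mul,
      Nat.sub_mul, one_mul, ← pow_two, pow_two, hq, neg_one_pow_char_pow (R := F[X]) p]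
    ring
  rw [hL, hR]
end

section
/- Let q be a prime power and K the finite field with q^2 elements. The number of pairs (x, y) in K × K satisfying y^{q+1} = x^q + x is exactly q^3. -/
open Finset Polynomial

lemma card_filter_root_le {K : Type*} [Field K] [Fintype K] [DecidableEq K]
    (f : Polynomial K) (hf : f ≠ 0) :
    (Finset.univ.filter fun x : K => f.eval x = 0).card ≤ f.natDegree := by
  classical
  have h1 : (Finset.univ.filter fun x : K => f.eval x = 0) ⊆ f.roots.toFinset := by
    intro x hx
    simp only [mem_filter, mem_univ, true_and] at hx
    simp [Polynomial.mem_roots, hf, hx]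
  calc (Finset.univ.filter fun x : K => f.eval x = 0).card
      ≤ f.roots.toFinset.card := Finset.card_le_card h1
    _ ≤ Multiset.card f.roots := Multiset.toFinset_card_le _
    _ ≤ f.natDegree := Polynomial.card_roots' f

theorem hermitian_affine_point_count
    (p n q : ℕ) (hp : p.Prime) (hn : n ≠ 0) (hq : q = p ^ n)
    (K : Type*) [Field K] [Fintype K] [DecidableEq K]
    (hK : Fintype.card K = q ^ 2) :
    (Finset.univ.filter
        (fun xy : K × K => xy.2 ^ (q + 1) = xy.1 ^ q + xy.1)).card = q ^ 3 := by
  classical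
  have hq2 : 2 ≤ q := by
    rw [hq]; exact Nat.one_lt_pow hn hp.one_lt
  haveI : Fact p.Prime := ⟨hp⟩
  -- characteristic
  haveI hcharK : CharP K p := by
    have h1 : (ringChar K) ∣ p ^ (n * 2) := by
      have hd : (ringChar K : ℕ) ∣ Fintype.card K :=
        (CharP.cast_eq_zero_iff K (ringChar K) (Fintype.card K)).mp
          (Nat.cast_card_eq_zero K)
      rw [hK, hq, ← pow_mul] at hd
      exact hd
    have hrp : ringChar K = p := by
      have hrprime : (ringChar K).Prime := CharP.char_is_prime K (ringChar K)
      have := hrprime.dvd_of_dvd_pow h1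
      exact (Nat.prime_dvd_prime_iff_eq hrprime hp).mp this
    rw [← hrp]; exact ringChar.charP K
  have hfrob : ∀ a b : K, (a + b) ^ q = a ^ q + b ^ q := by
    intro a b; rw [hq]; exact add_pow_char_pow a b p n
  have hfrobsub : ∀ a b : K, (a - b) ^ q = a ^ q - b ^ q := by
    intro a b; rw [hq]; exact sub_pow_char_pow a b n
  have hpowcard : ∀ a : K, a ^ q ^ 2 = a := by
    intro a; rw [← hK]; exact FiniteField.pow_card a
  have hq0 : q ≠ 0 := by omega
  -- trace values are fixed by Frobenius
  have hTfix : ∀ x : K, (x ^ q + x) ^ q = x ^ q + x := by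
    intro x
    rw [hfrob, ← pow_mul, ← pow_two, hpowcard]
    ring
  set S : K → ℕ := fun c => (Finset.univ.filter fun y : K => y ^ (q + 1) = c).card with hS
  have hS0 : S 0 = 1 := by
    rw [hS]
    simp [pow_eq_zero_iff (by omega : q + 1 ≠ 0), Finset.filter_eq']
  -- all nonzero solvable fibers have the same size
  have hSc : ∀ (c y₀ : K), y₀ ≠ 0 → y₀ ^ (q + 1) = c → S c = S 1 := by
    intro c y₀ hy₀ hyc
    have hc0 : c ≠ 0 := hyc ▸ pow_ne_zero _ hy₀
    apply Finset.card_nbij' (fun y => y * y₀⁻¹) (fun y => y * y₀)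
    · intro a ha
      simp only [Finset.mem_coe, mem_filter, mem_univ, true_and] at ha ⊢
      rw [mul_pow, ha, inv_pow, hyc, mul_inv_cancel₀ hc0]
    · intro a ha
      simp only [Finset.mem_coe, mem_filter, mem_univ, true_and] at ha ⊢
      rw [mul_pow, ha, hyc, one_mul]
    · intro a _; field_simp
    · intro a _; field_simp
  -- the set of nonzero Frobenius-fixed elements
  set E : Finset K := Finset.univ.filter fun c : K => c ≠ 0 ∧ c ^ q = c with hE
  have hEcard : E.card ≤ q - 1 := by
    have hne : (X ^ (q - 1) - C 1 : Polynomial K) ≠ 0 := by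
      intro h
      have := congrArg Polynomial.natDegree h
      rw [Polynomial.natDegree_X_pow_sub_C] at this
      simp at this; omega
    have hdeg : (X ^ (q - 1) - C 1 : Polynomial K).natDegree = q - 1 :=
      Polynomial.natDegree_X_pow_sub_C
    have hsub : E ⊆ Finset.univ.filter fun x : K =>
        (X ^ (q - 1) - C 1 : Polynomial K).eval x = 0 := by
      intro c hc
      simp only [hE, mem_filter, mem_univ, true_and] at hc ⊢
      obtain ⟨hc0, hcq⟩ := hc
      have : c ^ (q - 1) = 1 := by
        have h1 : c ^ (q - 1) * c = c := by
          rw [← pow_succ]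
          have : q - 1 + 1 = q := by omega
          rw [this, hcq]
        field_simp at h1
        exact h1
      simp [this]
    calc E.card ≤ _ := Finset.card_le_card hsub
      _ ≤ (X ^ (q - 1) - C 1 : Polynomial K).natDegree := card_filter_root_le _ hne
      _ = q - 1 := hdeg
  -- norm image of nonzero elements
  set B : Finset K := (Finset.univ \ {0} : Finset K).image fun y : K => y ^ (q + 1) with hB
  have hBsub : B ⊆ E := by
    intro c hc
    simp only [hB, Finset.mem_image, Finset.mem_sdiff, Finset.mem_singleton] at hc
    obtain ⟨y, ⟨_, hy0⟩, hyc⟩ := hc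
    simp only [hE, mem_filter, mem_univ, true_and]
    constructor
    · exact hyc ▸ pow_ne_zero _ hy0
    · rw [← hyc, ← pow_mul]
      have : (q + 1) * q = q ^ 2 + q := by ring
      rw [this, pow_add, hpowcard, ← pow_succ']
  have hcard0 : (Finset.univ \ {0} : Finset K).card = q ^ 2 - 1 := by
    rw [Finset.card_sdiff_of_subset (by simp), Finset.card_univ, hK, Finset.card_singleton]
  have hfibsum : (Finset.univ \ {0} : Finset K).card =
      ∑ c ∈ B, ((Finset.univ \ {0} : Finset K).filter fun y => y ^ (q + 1) = c).card := by
    apply Finset.card_eq_sum_card_fiberwise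
    intro y hy
    exact Finset.mem_image_of_mem _ hy
  have hfib_eq : ∀ c ∈ B,
      ((Finset.univ \ {0} : Finset K).filter fun y => y ^ (q + 1) = c).card = S 1 := by
    intro c hc
    simp only [hB, Finset.mem_image, Finset.mem_sdiff, Finset.mem_singleton] at hc
    obtain ⟨y₀, ⟨_, hy0⟩, hyc⟩ := hc
    have hc0 : c ≠ 0 := hyc ▸ pow_ne_zero _ hy0
    have : ((Finset.univ \ {0} : Finset K).filter fun y => y ^ (q + 1) = c) =
        (Finset.univ.filter fun y : K => y ^ (q + 1) = c) := by
      ext y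
      simp only [Finset.mem_filter, Finset.mem_sdiff, Finset.mem_singleton, Finset.mem_univ,
        true_and]
      constructor
      · tauto
      · intro h
        refine ⟨fun hy => ?_, h⟩
        rw [hy, zero_pow (by omega : q + 1 ≠ 0)] at h
        exact hc0 h.symm
    rw [this]
    exact hSc c y₀ hy0 hyc
  have hmult : q ^ 2 - 1 = B.card * S 1 := by
    rw [← hcard0, hfibsum, Finset.sum_congr rfl hfib_eq, Finset.sum_const, smul_eq_mul]
  have hS1le : S 1 ≤ q + 1 := by
    have hne : (X ^ (q + 1) - C 1 : Polynomial K) ≠ 0 := by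
      intro h
      have := congrArg Polynomial.natDegree h
      rw [Polynomial.natDegree_X_pow_sub_C] at this
      simp at this
    have hdeg : (X ^ (q + 1) - C 1 : Polynomial K).natDegree = q + 1 :=
      Polynomial.natDegree_X_pow_sub_C
    have hsub : (Finset.univ.filter fun y : K => y ^ (q + 1) = 1) ⊆
        Finset.univ.filter fun x : K => (X ^ (q + 1) - C 1 : Polynomial K).eval x = 0 := by
      intro y hy
      simp only [mem_filter, mem_univ, true_and] at hy ⊢
      simp [hy]
    calc S 1 ≤ _ := Finset.card_le_card hsub
      _ ≤ (X ^ (q + 1) - C 1 : Polynomial K).natDegree := card_filter_root_le _ hne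
      _ = q + 1 := hdeg
  have hBle : B.card ≤ q - 1 := le_trans (Finset.card_le_card hBsub) hEcard
  -- deduce S 1 = q + 1 and B.card = q - 1
  have e1 : (q - 1) * (q + 1) = q ^ 2 - 1 := by
    obtain ⟨q', rfl⟩ : ∃ q', q = q' + 1 := ⟨q - 1, by omega⟩
    rw [show (q' + 1) ^ 2 = q' * (q' + 2) + 1 by ring, Nat.add_sub_cancel, Nat.add_sub_cancel]
  have hS1 : S 1 = q + 1 := by
    by_contra hne1
    have hlt : S 1 < q + 1 := lt_of_le_of_ne hS1le hne1
    have t1 : B.card * S 1 ≤ (q - 1) * S 1 := Nat.mul_le_mul_right _ hBle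
    have t2 : (q - 1) * S 1 < (q - 1) * (q + 1) :=
      (Nat.mul_lt_mul_left (by omega : 0 < q - 1)).mpr hlt
    have t3 : B.card * S 1 < (q - 1) * (q + 1) := lt_of_le_of_lt t1 t2
    rw [← hmult, e1] at t3
    exact lt_irrefl _ t3
  have hBcard : B.card = q - 1 := by
    have h6 : B.card * (q + 1) = (q - 1) * (q + 1) := by
      calc B.card * (q + 1) = B.card * S 1 := by rw [hS1]
        _ = q ^ 2 - 1 := hmult.symm
        _ = (q - 1) * (q + 1) := e1.symm
    exact Nat.eq_of_mul_eq_mul_right (by omega) h6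
  have hBE : B = E := Finset.eq_of_subset_of_card_le hBsub (by omega)
  -- every nonzero Frobenius-fixed element is a norm
  have hSnorm : ∀ c : K, c ≠ 0 → c ^ q = c → S c = q + 1 := by
    intro c hc0 hcq
    have hcE : c ∈ E := by simp [hE, hc0, hcq]
    rw [← hBE] at hcE
    simp only [hB, Finset.mem_image, Finset.mem_sdiff, Finset.mem_singleton] at hcE
    obtain ⟨y₀, ⟨_, hy0⟩, hyc⟩ := hcE
    rw [hSc c y₀ hy0 hyc, hS1]
  -- additive side: kernel of the trace
  set k : ℕ := (Finset.univ.filter fun x : K => x ^ q + x = 0).card with hkdef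
  have hkle : k ≤ q := by
    have hdeg : (X ^ q + X : Polynomial K).natDegree = q := by
      compute_degree!
      · rw [if_neg (by omega : ¬ 1 = q)]; norm_num
      · omega
    have hne : (X ^ q + X : Polynomial K) ≠ 0 := by
      intro h
      rw [h] at hdeg
      simp at hdeg
      omega
    have hsub : (Finset.univ.filter fun x : K => x ^ q + x = 0) ⊆
        Finset.univ.filter fun x : K => (X ^ q + X : Polynomial K).eval x = 0 := by
      intro x hx
      simp only [mem_filter, mem_univ, true_and] at hx ⊢
      simp [hx]
    calc k ≤ _ := Finset.card_le_card hsub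
      _ ≤ (X ^ q + X : Polynomial K).natDegree := card_filter_root_le _ hne
      _ = q := hdeg
  set R : Finset K := Finset.univ.image fun x : K => x ^ q + x with hR
  have hRle : R.card ≤ q := by
    have hdeg : (X ^ q - X : Polynomial K).natDegree = q := by
      compute_degree!
      · rw [if_neg (by omega : ¬ 1 = q)]; norm_num
      · omega
    have hne : (X ^ q - X : Polynomial K) ≠ 0 := by
      intro h
      rw [h] at hdeg
      simp at hdeg
      omega
    have hsub : R ⊆ Finset.univ.filter fun x : K =>
        (X ^ q - X : Polynomial K).eval x = 0 := by
      intro c hc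
      simp only [hR, Finset.mem_image, Finset.mem_univ, true_and] at hc
      obtain ⟨x, hx⟩ := hc
      simp only [mem_filter, mem_univ, true_and]
      simp [← hx, hTfix x]
    calc R.card ≤ _ := Finset.card_le_card hsub
      _ ≤ (X ^ q - X : Polynomial K).natDegree := card_filter_root_le _ hne
      _ = q := hdeg
  have hfibT : ∀ c ∈ R, (Finset.univ.filter fun x : K => x ^ q + x = c).card = k := by
    intro c hc
    simp only [hR, Finset.mem_image, Finset.mem_univ, true_and] at hc
    obtain ⟨x₀, hx₀⟩ := hc
    rw [hkdef]
    apply Finset.card_nbij' (fun x => x - x₀) (fun x => x + x₀)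
    · intro a ha
      simp only [Finset.mem_coe, mem_filter, mem_univ, true_and] at ha ⊢
      rw [hfrobsub,
        show a ^ q - x₀ ^ q + (a - x₀) = a ^ q + a - (x₀ ^ q + x₀) by ring, ha, hx₀,
        sub_self]
    · intro a ha
      simp only [Finset.mem_coe, mem_filter, mem_univ, true_and] at ha ⊢
      rw [hfrob, ← hx₀]
      rw [show a ^ q + x₀ ^ q + (a + x₀) = (a ^ q + a) + (x₀ ^ q + x₀) by ring, ha]
      ring
    · intro a _; ring
    · intro a _; ring
  have hfibsumT : (Finset.univ : Finset K).card =
      ∑ c ∈ R, ((Finset.univ : Finset K).filter fun x => x ^ q + x = c).card := by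
    apply Finset.card_eq_sum_card_fiberwise
    intro x _
    exact Finset.mem_image_of_mem _ (Finset.mem_univ x)
  have hadd : q ^ 2 = R.card * k := by
    have h9 := hfibsumT
    rw [Finset.sum_congr rfl hfibT, Finset.sum_const, smul_eq_mul,
      Finset.card_univ, hK] at h9
    exact h9
  have hkq : k = q := by
    have h7 : q * q ≤ q * k := by
      calc q * q = q ^ 2 := (sq q).symm
        _ = R.card * k := hadd
        _ ≤ q * k := Nat.mul_le_mul_right _ hRle
    have := Nat.le_of_mul_le_mul_left h7 (by omega)
    omega
  -- main count: fiber over x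
  have hmain : (Finset.univ.filter
      (fun xy : K × K => xy.2 ^ (q + 1) = xy.1 ^ q + xy.1)).card
      = ∑ x : K, S (x ^ q + x) := by
    rw [Finset.card_eq_sum_card_fiberwise
      (f := Prod.fst) (t := Finset.univ) (fun x _ => Finset.mem_univ _)]
    apply Finset.sum_congr rfl
    intro x _
    rw [hS]
    apply Finset.card_nbij' Prod.snd (fun y => (x, y))
    · intro a ha
      simp only [Finset.mem_coe, Finset.mem_filter, Finset.mem_univ, true_and] at ha ⊢
      obtain ⟨hP, hfst⟩ := ha
      rw [hP, hfst]
    · intro y hy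
      simp only [Finset.mem_coe, Finset.mem_filter, Finset.mem_univ, true_and] at hy ⊢
      exact ⟨hy, trivial⟩
    · intro a ha
      simp only [Finset.mem_coe, Finset.mem_filter, Finset.mem_univ, true_and] at ha
      exact Prod.ext ha.2.symm rfl
    · intro a _; rfl
  rw [hmain]
  -- split the sum according to trace zero / nonzero
  rw [← Finset.sum_filter_add_sum_filter_not Finset.univ (fun x : K => x ^ q + x = 0)]
  have h1 : ∑ x ∈ Finset.univ.filter (fun x : K => x ^ q + x = 0), S (x ^ q + x) = q := by
    rw [Finset.sum_congr rfl (fun x hx => by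
      simp only [Finset.mem_filter] at hx
      rw [hx.2, hS0])]
    rw [Finset.sum_const, smul_eq_mul, mul_one, ← hkdef, hkq]
  have h2 : ∑ x ∈ Finset.univ.filter (fun x : K => ¬ x ^ q + x = 0), S (x ^ q + x)
      = (q ^ 2 - q) * (q + 1) := by
    rw [Finset.sum_congr rfl (fun x hx => by
      simp only [Finset.mem_filter] at hx
      exact hSnorm _ hx.2 (hTfix x))]
    rw [Finset.sum_const, smul_eq_mul]
    congr 1
    have := Finset.card_filter_add_card_filter_not
      (s := (Finset.univ : Finset K)) (p := fun x : K => x ^ q + x = 0)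
    rw [Finset.card_univ, hK, ← hkdef, hkq] at this
    omega
  rw [h1, h2]
  have hqle : q ≤ q ^ 2 := Nat.le_self_pow two_ne_zero q
  zify [hqle]
  ring
end

section
/- Let q be a prime power. The number of points (x, y, z) in F_{q^6}^3 satisfying z^{q^2-q+1} = y^{q^2} - y and y^{q+1} = x^q + x with z = 0 is exactly q^3, namely the pairs (x,y) with y in the subfield F_{q^2} satisfying the Hermitian equation y^{q+1} = x^q + x, and all such solutions have x in F_{q^2}. -/
open Polynomial Finset

lemma count_roots_of_dvd {F : Type*} [Field F] [Fintype F] [DecidableEq F]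
    (g : F[X]) (hg0 : g ≠ 0) (hdvd : g ∣ (X ^ Fintype.card F - X)) :
    (Finset.univ.filter (fun x : F => g.eval x = 0)).card = g.natDegree := by
  set P : F[X] := X ^ Fintype.card F - X with hP
  have hPne : P ≠ 0 := FiniteField.X_pow_card_sub_X_ne_zero F Fintype.one_lt_card
  have hroots : P.roots = Finset.univ.val := FiniteField.roots_X_pow_card_sub_X F
  have hPdeg : P.natDegree = Fintype.card F :=
    FiniteField.X_pow_card_sub_X_natDegree_eq F Fintype.one_lt_card
  have hPsplits : P.Splits := by
    rw [Polynomial.splits_iff_card_roots, hroots, hPdeg]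
    simp
  have hgsplits : g.Splits :=
    Polynomial.Splits.of_dvd hPsplits hPne hdvd
  have hcard : g.roots.card = g.natDegree :=
    (Polynomial.splits_iff_card_roots).mp hgsplits
  have hle : g.roots ≤ P.roots := Polynomial.roots.le_of_dvd hPne hdvd
  have hnodup : g.roots.Nodup := by
    refine Multiset.nodup_of_le hle ?_
    rw [hroots]; exact Finset.univ.nodup
  have : Finset.univ.filter (fun x : F => g.eval x = 0) = g.roots.toFinset := by
    ext x
    simp [Polynomial.mem_roots, hg0]
  rw [this, Multiset.toFinset_card_of_nodup hnodup, hcard]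

lemma dvd_aux {F : Type*} [Field F] (p n : ℕ) [Fact p.Prime] [CharP F p]
    (q : ℕ) (hq : q = p ^ n) :
    (X ^ q ^ 2 - X : F[X]) ∣ (X ^ q ^ 6 - X) := by
  have hq0 : q ≠ 0 := by rw [hq]; exact pow_ne_zero _ (Fact.out : p.Prime).pos.ne'
  have h2 : q ^ 2 = p ^ (2 * n) := by rw [hq, ← pow_mul, mul_comm]
  have h4 : q ^ 4 = p ^ (4 * n) := by rw [hq, ← pow_mul, mul_comm]
  have key : (X ^ q ^ 6 - X : F[X]) =
      (X ^ q ^ 2 - X) ^ q ^ 4 + (X ^ q ^ 2 - X) ^ q ^ 2 + (X ^ q ^ 2 - X) := by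
    rw [h2, h4, sub_pow_char_pow, sub_pow_char_pow, ← pow_mul, ← pow_mul]
    have e1 : p ^ (2 * n) * p ^ (4 * n) = q ^ 6 := by
      rw [hq, ← pow_add, ← pow_mul]; congr 1; ring
    have e2 : p ^ (2 * n) * p ^ (2 * n) = p ^ (4 * n) := by
      rw [← pow_add]; congr 1; ring
    rw [e1, e2]
    ring
  rw [key]
  exact dvd_add (dvd_add (dvd_pow_self _ (pow_ne_zero _ hq0))
    (dvd_pow_self _ (pow_ne_zero _ hq0))) dvd_rfl

lemma dvd_aux2 {F : Type*} [Field F] (p n : ℕ) [Fact p.Prime] [CharP F p]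
    (q : ℕ) (hq : q = p ^ n) (c : F) (hc : c ^ q = c) :
    (X ^ q + X - C c : F[X]) ∣ (X ^ q ^ 2 - X) := by
  set g : F[X] := X ^ q + X - C c with hg
  have key : (X ^ q ^ 2 - X : F[X]) = g ^ q - g := by
    rw [hg, hq, sub_pow_char_pow, add_pow_char_pow, ← pow_mul, ← C_pow, ← hq, hc, ← pow_mul]
    have : p ^ (n * 2) = q * q := by rw [hq]; ring
    rw [this]
    ring
  rw [key]
  exact dvd_sub (dvd_pow_self _ (by rw [hq]; exact pow_ne_zero _ (Fact.out : p.Prime).pos.ne'))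
    dvd_rfl

lemma deg_aux {F : Type*} [Field F] (q : ℕ) (hq : 1 < q) (c : F) :
    (X ^ q + X - C c : F[X]).natDegree = q := by
  have h1 : (X - C c : F[X]).degree < (X ^ q : F[X]).degree := by
    apply lt_of_le_of_lt (degree_sub_le _ _)
    rw [degree_X_pow, degree_X]
    apply max_lt
    · exact_mod_cast hq
    · exact lt_of_le_of_lt (degree_C_le) (by exact_mod_cast Nat.lt_of_lt_of_le Nat.zero_lt_one hq.le)
  have : (X ^ q + X - C c : F[X]) = X ^ q + (X - C c) := by ring
  rw [this, natDegree_eq_of_degree_eq (degree_add_eq_left_of_degree_lt h1), natDegree_X_pow]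

-- count of x with x^q + x = c, for c fixed by Frobenius
lemma count_x {F : Type*} [Field F] [Fintype F] [DecidableEq F]
    (p n q : ℕ) [Fact p.Prime] [CharP F p] (hn : n ≠ 0) (hq : q = p ^ n)
    (hF : Fintype.card F = q ^ 6) (c : F) (hc : c ^ q = c) :
    (Finset.univ.filter (fun x : F => x ^ q + x = c)).card = q := by
  have hq1 : 1 < q := by rw [hq]; exact Nat.one_lt_pow hn (Fact.out : p.Prime).one_lt
  set g : F[X] := X ^ q + X - C c with hg
  have hdeg : g.natDegree = q := deg_aux q hq1 c
  have hg0 : g ≠ 0 := by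
    intro h
    rw [h, natDegree_zero] at hdeg
    omega
  have hdvd : g ∣ (X ^ Fintype.card F - X) := by
    rw [hF]
    exact (dvd_aux2 p n q hq c hc).trans (dvd_aux p n q hq)
  have hset : Finset.univ.filter (fun x : F => x ^ q + x = c)
      = Finset.univ.filter (fun x : F => g.eval x = 0) := by
    apply Finset.filter_congr
    intro x _
    simp only [hg, eval_sub, eval_add, eval_pow, eval_X, eval_C, sub_eq_zero]
  rw [hset, count_roots_of_dvd g hg0 hdvd, hdeg]

lemma count_y {F : Type*} [Field F] [Fintype F] [DecidableEq F]
    (p n q : ℕ) [Fact p.Prime] [CharP F p] (hn : n ≠ 0) (hq : q = p ^ n)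
    (hF : Fintype.card F = q ^ 6) :
    (Finset.univ.filter (fun y : F => y ^ q ^ 2 = y)).card = q ^ 2 := by
  have hq1 : 1 < q := by rw [hq]; exact Nat.one_lt_pow hn (Fact.out : p.Prime).one_lt
  set g : F[X] := X ^ q ^ 2 - X with hg
  have hdeg : g.natDegree = q ^ 2 :=
    FiniteField.X_pow_card_sub_X_natDegree_eq F (Nat.one_lt_pow two_ne_zero hq1)
  have hg0 : g ≠ 0 := FiniteField.X_pow_card_sub_X_ne_zero F (Nat.one_lt_pow two_ne_zero hq1)
  have hdvd : g ∣ (X ^ Fintype.card F - X) := by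
    rw [hF]; exact dvd_aux p n q hq
  have hset : Finset.univ.filter (fun y : F => y ^ q ^ 2 = y)
      = Finset.univ.filter (fun y : F => g.eval y = 0) := by
    apply Finset.filter_congr
    intro x _
    simp only [hg, eval_sub, eval_pow, eval_X, sub_eq_zero]
  rw [hset, count_roots_of_dvd g hg0 hdvd, hdeg]

theorem gk_points_with_z_zero
    (p n q : ℕ) (hp : p.Prime) (hn : n ≠ 0) (hq : q = p ^ n)
    (F : Type*) [Field F] [Fintype F] [DecidableEq F]
    (hF : Fintype.card F = q ^ 6) :
    (Finset.univ.filter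
        (fun w : F × F × F =>
          w.2.2 = 0 ∧
          w.2.2 ^ (q ^ 2 - q + 1) = w.2.1 ^ q ^ 2 - w.2.1 ∧
          w.2.1 ^ (q + 1) = w.1 ^ q + w.1)).card = q ^ 3 ∧
    (∀ x y z : F,
        z = 0 →
        z ^ (q ^ 2 - q + 1) = y ^ q ^ 2 - y →
        y ^ (q + 1) = x ^ q + x →
        y ^ q ^ 2 = y ∧ x ^ q ^ 2 = x) := by
  haveI : Fact p.Prime := ⟨hp⟩
  have hq1 : 1 < q := by rw [hq]; exact Nat.one_lt_pow hn hp.one_lt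
  -- characteristic of F is p
  haveI hcharp : CharP F p := by
    obtain ⟨r, hr⟩ := CharP.exists F
    obtain ⟨m, hrprime, hcard⟩ := @FiniteField.card F _ _ r hr
    have : r ∣ p := by
      have h1 : r ∣ r ^ (m : ℕ) := dvd_pow_self r m.ne_zero
      rw [← hcard, hF, hq, ← pow_mul] at h1
      exact hrprime.dvd_of_dvd_pow h1
    have : r = p := ((Nat.prime_dvd_prime_iff_eq hrprime hp).mp this)
    rwa [← this]
  -- exponent on z is positive
  have hexp : q ^ 2 - q + 1 ≠ 0 := by omega
  -- the pointwise statement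
  have hpt : ∀ x y z : F, z = 0 → z ^ (q ^ 2 - q + 1) = y ^ q ^ 2 - y →
      y ^ (q + 1) = x ^ q + x → y ^ q ^ 2 = y ∧ x ^ q ^ 2 = x := by
    intro x y z hz h1 h2
    subst hz
    rw [zero_pow hexp] at h1
    have hy : y ^ q ^ 2 = y := by
      have := h1.symm
      rwa [sub_eq_zero] at this
    refine ⟨hy, ?_⟩
    -- y^{q+1} is fixed by Frobenius
    have hc : (y ^ (q + 1)) ^ q = y ^ (q + 1) := by
      rw [← pow_mul]
      have : (q + 1) * q = q ^ 2 + q := by ring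
      rw [this, pow_add, hy]
      rw [pow_add, pow_one, mul_comm]
    -- apply Frobenius to h2
    have h3 : (x ^ q + x) ^ q = x ^ q + x := by rw [← h2, hc]
    rw [hq, add_pow_char_pow, ← hq, ← pow_mul] at h3
    have hqq : q * q = q ^ 2 := (sq q).symm
    rw [hqq] at h3
    -- h3 : x^{q^2} + x^q = x^q + x
    have h4 : x ^ q ^ 2 + x ^ q = x + x ^ q := by rw [h3]; ring
    exact add_right_cancel h4
  refine ⟨?_, hpt⟩
  -- Frobenius-fixedness of y^{q+1} for y in the subfield
  have hfix : ∀ y : F, y ^ q ^ 2 = y → (y ^ (q + 1)) ^ q = y ^ (q + 1) := by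
    intro y hy
    rw [← pow_mul]
    have : (q + 1) * q = q ^ 2 + q := by ring
    rw [this, pow_add, hy, pow_add, pow_one, mul_comm]
  classical
  set T : Finset (F × F) :=
    Finset.univ.filter (fun xy : F × F => xy.2 ^ q ^ 2 = xy.2 ∧ xy.1 ^ q + xy.1 = xy.2 ^ (q + 1))
    with hT
  have hSeq : (Finset.univ.filter
        (fun w : F × F × F =>
          w.2.2 = 0 ∧
          w.2.2 ^ (q ^ 2 - q + 1) = w.2.1 ^ q ^ 2 - w.2.1 ∧
          w.2.1 ^ (q + 1) = w.1 ^ q + w.1))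
      = T.image (fun xy : F × F => (xy.1, xy.2, (0 : F))) := by
    ext w
    simp only [Finset.mem_filter, Finset.mem_image, Finset.mem_univ, true_and, hT]
    constructor
    · rintro ⟨hz, h1, h2⟩
      refine ⟨(w.1, w.2.1), ⟨?_, h2.symm⟩, ?_⟩
      · rw [hz, zero_pow hexp] at h1
        exact (sub_eq_zero.mp h1.symm)
      · rw [← hz]
    · rintro ⟨xy, ⟨hy, hx⟩, hw⟩
      subst hw
      refine ⟨rfl, ?_, hx.symm⟩
      rw [zero_pow hexp, hy, sub_self]
  rw [hSeq, Finset.card_image_of_injective _ (by intro a b hab; simpa [Prod.ext_iff] using hab)]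
  set Fy : Finset F := Finset.univ.filter (fun y : F => y ^ q ^ 2 = y) with hFy
  have hfiber : T.card = ∑ y ∈ Fy, (T.filter (fun xy : F × F => xy.2 = y)).card := by
    apply Finset.card_eq_sum_card_fiberwise
    intro xy hxy
    rw [hT] at hxy
    simp only [Finset.mem_coe, Finset.mem_filter, Finset.mem_univ, true_and] at hxy
    rw [hFy]
    simp [hxy.1]
  rw [hfiber]
  have hstep : ∀ y ∈ Fy, (T.filter (fun xy : F × F => xy.2 = y)).card = q := by
    intro y hy
    rw [hFy] at hy
    simp only [Finset.mem_filter, Finset.mem_univ, true_and] at hy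
    have hc : (y ^ (q + 1)) ^ q = y ^ (q + 1) := hfix y hy
    have hcx := count_x p n q hn hq hF (y ^ (q + 1)) hc
    rw [← hcx]
    apply Finset.card_bij (fun xy _ => xy.1)
    · intro xy hxy
      simp only [hT, Finset.mem_filter, Finset.mem_univ, true_and] at hxy ⊢
      exact hxy.2 ▸ hxy.1.2
    · intro a ha b hb hab
      simp only [hT, Finset.mem_filter, Finset.mem_univ, true_and] at ha hb
      exact Prod.ext hab (ha.2.trans hb.2.symm)
    · intro x hx
      simp only [Finset.mem_filter, Finset.mem_univ, true_and] at hx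
      refine ⟨(x, y), ?_, rfl⟩
      simp only [hT, Finset.mem_filter, Finset.mem_univ, true_and]
      exact ⟨⟨hy, hx⟩, trivial⟩
  rw [Finset.sum_congr rfl hstep, Finset.sum_const, smul_eq_mul]
  rw [hFy] at *
  rw [count_y p n q hn hq hF]
  ring
end
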